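/- Suppose the relation ℘_{6666} = 6℘_{66}² − 3℘_{55} holds identically on U. Then the function P := ℘_{66} = −∂²_{u_6} log σ satisfies the Boussinesq equation on U, with u_6 the space variable and u_5 the time variable: ∂²P/∂u_5² = 4(∂P/∂u_6)² + 4P·∂²P/∂u_6² − (1/3)·∂⁴P/∂u_6⁴. (This follows by differentiating the hypothesised relation twice with respect to u_6 and using ℘_{5566} = ∂²℘_{66}/∂u_5², ℘_{666} = ∂℘_{66}/∂u_6, ℘_{6666} = ∂²℘_{66}/∂u_6², ℘_{666666} = ∂⁴℘_{66}/∂u_6⁴.) -/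

import Mathlib

/-! Since `℘_{6666} = ∂₆²℘_{66}`, the hypothesis reads `P'' = 6P² − 3℘_{55}` with `' = ∂₆`;
differentiating it twice gives `P'''' = 12(P'² + P P'') − 3 ∂₆²℘_{55}`. The Boussinesq equation
follows because `∂₆²℘_{55} = ∂₅²℘_{66}`: the third derivatives of the log-derivatives
`∂_j σ / σ` are symmetric in all indices, by Schwarz's theorem for the analytic `σ` together with
`∂_i(∂_j σ/σ) = ∂_j(∂_i σ/σ)`. -/

/-- Partial derivative in the `i`-th coordinate direction of a function `ℂ⁶ → ℂ`. -/
noncomputable def pd (i : Fin 6) (f : (Fin 6 → ℂ) → ℂ) : (Fin 6 → ℂ) → ℂ :=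
  fun u => fderiv ℂ f u (Pi.single i 1)

/-- `∂_j log σ = ∂_j σ / σ` (independent of the choice of branch of `log σ`). -/
noncomputable def dlog (σ : (Fin 6 → ℂ) → ℂ) (j : Fin 6) : (Fin 6 → ℂ) → ℂ :=
  fun u => pd j σ u / σ u

/-- The 2-index Kleinian ℘-function `℘_{ij} = −∂_i ∂_j log σ`
(here the variable `u_k` corresponds to the coordinate `k − 1 : Fin 6`). -/
noncomputable def wp2 (σ : (Fin 6 → ℂ) → ℂ) (i j : Fin 6) : (Fin 6 → ℂ) → ℂ :=
  fun u => -(pd i (dlog σ j) u)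

/-- The 4-index Kleinian ℘-function `℘_{ijkl} = −∂_i ∂_j ∂_k ∂_l log σ`. -/
noncomputable def wp4 (σ : (Fin 6 → ℂ) → ℂ) (i j k l : Fin 6) : (Fin 6 → ℂ) → ℂ :=
  fun u => -(pd i (pd j (pd k (dlog σ l))) u)

open Set

section PartialDerivative

variable {i j : Fin 6} {f g : (Fin 6 → ℂ) → ℂ} {U : Set (Fin 6 → ℂ)} {u : Fin 6 → ℂ}

lemma pd_eqOn (hU : IsOpen U) (h : EqOn f g U) : EqOn (pd i f) (pd i g) U := fun _ hu => by
  rw [pd, pd, (Filter.eventuallyEq_of_mem (hU.mem_nhds hu) h).fderiv_eq]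

lemma AnalyticOnNhd.pd (hf : AnalyticOnNhd ℂ f U) (i : Fin 6) : AnalyticOnNhd ℂ (pd i f) U :=
  (ContinuousLinearMap.apply ℂ ℂ (Pi.single i 1 : Fin 6 → ℂ)).comp_analyticOnNhd hf.fderiv

lemma pd_neg (i : Fin 6) (f : (Fin 6 → ℂ) → ℂ) : pd i (fun v => -f v) = fun v => -pd i f v := by
  funext v
  simp [pd]

lemma pd_add (hf : DifferentiableAt ℂ f u) (hg : DifferentiableAt ℂ g u) :
    pd i (fun v => f v + g v) u = pd i f u + pd i g u := by
  simp [pd, fderiv_fun_add hf hg]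

lemma pd_const_mul (c : ℂ) (hf : DifferentiableAt ℂ f u) :
    pd i (fun v => c * f v) u = c * pd i f u := by
  simp [pd, fderiv_const_mul hf]

lemma pd_mul (hf : DifferentiableAt ℂ f u) (hg : DifferentiableAt ℂ g u) :
    pd i (fun v => f v * g v) u = pd i f u * g u + f u * pd i g u := by
  simp only [pd, fderiv_fun_mul hf hg, add_apply, smul_apply, smul_eq_mul]
  ring

lemma pd_sq (hf : DifferentiableAt ℂ f u) :
    pd i (fun v => f v ^ 2) u = 2 * f u * pd i f u := by
  simp only [sq, pd_mul hf hf]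
  ring

lemma pd_comm (hf : AnalyticOnNhd ℂ f U) (i j : Fin 6) :
    EqOn (pd i (pd j f)) (pd j (pd i f)) U := by
  intro u hu
  have hD : HasFDerivAt (fderiv ℂ f) (fderiv ℂ (fderiv ℂ f) u) u :=
    (hf.fderiv u hu).differentiableAt.hasFDerivAt
  have hdir (v w : Fin 6 → ℂ) :
      fderiv ℂ (fun y => fderiv ℂ f y v) u w = fderiv ℂ (fderiv ℂ f) u w v :=
    ((ContinuousLinearMap.apply ℂ ℂ v).hasFDerivAt.comp u hD).fderiv ▸ rfl
  have hsymm : IsSymmSndFDerivAt ℂ f u :=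
    ((hf u hu).contDiffAt (n := 2)).isSymmSndFDerivAt (by simp)
  unfold pd
  rw [hdir, hdir, hsymm.eq]

lemma eqOn_pd_pd_pd_pd_of_eqOn_pd_pd (hU : IsOpen U) (hf : AnalyticOnNhd ℂ f U)
    (hg : AnalyticOnNhd ℂ g U) (a b : ℂ)
    (h : EqOn (pd i (pd i f)) (fun v => a * f v ^ 2 + b * g v) U) :
    EqOn (pd i (pd i (pd i (pd i f))))
      (fun v => 2 * a * (pd i f v ^ 2 + f v * pd i (pd i f) v) + b * pd i (pd i g) v) U := by
  have h' : EqOn (pd i (pd i (pd i f))) (fun v => 2 * a * (f v * pd i f v) + b * pd i g v) U := by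
    intro v hv
    have hfv := (hf v hv).differentiableAt
    have hgv := (hg v hv).differentiableAt
    rw [pd_eqOn hU h hv, pd_add (by fun_prop) (by fun_prop), pd_const_mul _ (by fun_prop),
      pd_const_mul _ hgv, pd_sq hfv]
    ring
  intro v hv
  have hfv := (hf v hv).differentiableAt
  have hf'v := ((hf.pd i) v hv).differentiableAt
  have hg'v := ((hg.pd i) v hv).differentiableAt
  rw [pd_eqOn hU h' hv, pd_add (by fun_prop) (by fun_prop), pd_const_mul _ (by fun_prop),
    pd_const_mul _ hg'v, pd_mul hfv hf'v]
  ring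

end PartialDerivative

section LogDerivative

variable {σ : (Fin 6 → ℂ) → ℂ} {U : Set (Fin 6 → ℂ)}

lemma AnalyticOnNhd.dlog (hσ : AnalyticOnNhd ℂ σ U) (hσ0 : ∀ u ∈ U, σ u ≠ 0) (j : Fin 6) :
    AnalyticOnNhd ℂ (dlog σ j) U :=
  (hσ.pd j).div hσ hσ0

lemma AnalyticOnNhd.wp2 (hσ : AnalyticOnNhd ℂ σ U) (hσ0 : ∀ u ∈ U, σ u ≠ 0) (i j : Fin 6) :
    AnalyticOnNhd ℂ (wp2 σ i j) U :=
  ((hσ.dlog hσ0 j).pd i).neg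

lemma pd_pd_wp2 (σ : (Fin 6 → ℂ) → ℂ) (i j k l : Fin 6) :
    pd i (pd j (wp2 σ k l)) = wp4 σ i j k l := by
  unfold wp2 wp4
  rw [pd_neg, pd_neg]

lemma pd_dlog_comm (hU : IsOpen U) (hσ : AnalyticOnNhd ℂ σ U) (hσ0 : ∀ u ∈ U, σ u ≠ 0)
    (i j : Fin 6) : EqOn (pd i (dlog σ j)) (pd j (dlog σ i)) U := by
  -- differentiate `σ · dlog σ j = ∂_j σ` to get an expression symmetric in `i` and `j`
  have key (i j : Fin 6) : ∀ u ∈ U,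
      σ u * pd i (dlog σ j) u = pd i (pd j σ) u - pd i σ u * pd j σ u / σ u := by
    intro u hu
    have hprod : EqOn (fun v => σ v * dlog σ j v) (pd j σ) U := fun v hv =>
      mul_div_cancel₀ _ (hσ0 v hv)
    have h := pd_eqOn (i := i) hU hprod hu
    rw [pd_mul (hσ u hu).differentiableAt ((hσ.dlog hσ0 j) u hu).differentiableAt] at h
    rw [← h, dlog]
    ring
  intro u hu
  refine mul_left_cancel₀ (hσ0 u hu) ?_
  rw [key i j u hu, key j i u hu, pd_comm hσ i j hu]
  ring

lemma pd_pd_wp2_diag_comm (hU : IsOpen U) (hσ : AnalyticOnNhd ℂ σ U)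
    (hσ0 : ∀ u ∈ U, σ u ≠ 0) (i j : Fin 6) :
    EqOn (pd j (pd j (wp2 σ i i))) (pd i (pd i (wp2 σ j j))) U := by
  have hL := hσ.dlog hσ0
  intro u hu
  have h : pd j (pd j (pd i (dlog σ i))) u = pd i (pd i (pd j (dlog σ j))) u :=
    calc pd j (pd j (pd i (dlog σ i))) u
      _ = pd j (pd i (pd j (dlog σ i))) u := pd_eqOn hU (pd_comm (hL i) j i) hu
      _ = pd j (pd i (pd i (dlog σ j))) u :=
          pd_eqOn hU (pd_eqOn hU (pd_dlog_comm hU hσ hσ0 j i)) hu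
      _ = pd i (pd j (pd i (dlog σ j))) u := pd_comm ((hL j).pd i) j i hu
      _ = pd i (pd i (pd j (dlog σ j))) u := pd_eqOn hU (pd_comm (hL j) j i) hu
  simp only [pd_pd_wp2, wp4, h]

end LogDerivative

/-- if `℘_{6666} = 6℘_{66}² − 3℘_{55}` holds identically on `U`, then
`P := ℘_{66} = −∂²_{u6} log σ` satisfies the Boussinesq equation on `U`, with `u6` the space
variable and `u5` the time variable:
`∂²P/∂u5² = 4(∂P/∂u6)² + 4P·∂²P/∂u6² − (1/3)∂⁴P/∂u6⁴`. -/
theorem stmt_18 (U : Set (Fin 6 → ℂ)) (hU : IsOpen U)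
    (σ : (Fin 6 → ℂ) → ℂ) (hσ : AnalyticOnNhd ℂ σ U) (hσ0 : ∀ u ∈ U, σ u ≠ 0)
    (h1 : ∀ u ∈ U, wp4 σ 5 5 5 5 u = 6 * (wp2 σ 5 5 u) ^ 2 - 3 * wp2 σ 4 4 u) :
    ∀ u ∈ U,
      pd 4 (pd 4 (wp2 σ 5 5)) u
        = 4 * (pd 5 (wp2 σ 5 5) u) ^ 2 + 4 * wp2 σ 5 5 u * pd 5 (pd 5 (wp2 σ 5 5)) u
            - (1/3) * pd 5 (pd 5 (pd 5 (pd 5 (wp2 σ 5 5)))) u := by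
  have hrel : EqOn (pd 5 (pd 5 (wp2 σ 5 5))) (fun v => 6 * wp2 σ 5 5 v ^ 2 + -3 * wp2 σ 4 4 v) U :=
    fun v hv => by rw [pd_pd_wp2, h1 v hv]; ring
  intro u hu
  rw [← pd_pd_wp2_diag_comm hU hσ hσ0 4 5 hu,
    eqOn_pd_pd_pd_pd_of_eqOn_pd_pd hU (hσ.wp2 hσ0 5 5) (hσ.wp2 hσ0 4 4) 6 (-3) hrel hu]
  ring
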